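/- Every CW-complex is numerically generated: if X is a topological space admitting a CW-complex structure (with X equal to the union of its cells and carrying the weak topology determined by its closed cells), then the topology of X equals the final (coinduced) topology with respect to all continuous maps from topological standard simplices Δ^n into X. -/

import Mathlib

open TopologicalSpace Topology

/-- The topological standard `n`-simplex
`Δⁿ = {x ∈ ℝ^{n+1} : xᵢ ≥ 0, ∑ xᵢ = 1}` with its subspace topology. -/
abbrev TopSimplex (n : ℕ) : Type := stdSimplex ℝ (Fin (n + 1))

/-- The final (coinduced) topology on `X` with respect to all singular simplices of
`(X, t)`, i.e. with respect to all maps `Δⁿ → X` that are continuous for `t`. -/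
def nuTop (X : Type*) (t : TopologicalSpace X) : TopologicalSpace X :=
  ⨆ (n : ℕ) (σ : {f : TopSimplex n → X // Continuous[inferInstance, t] f}),
    TopologicalSpace.coinduced σ.1 inferInstance

/-- A topological space is numerically generated if its topology coincides with the
final topology with respect to all of its singular simplices. -/
def NumericallyGenerated (X : Type*) [t : TopologicalSpace X] : Prop :=
  t = nuTop X t

universe u

namespace CWComplexOld

open CategoryTheory

/-- The `n`-dimensional sphere (in `ℝ^{n+1}`). -/
noncomputable def sphere (n : ℤ) : TopCat.{u} :=
  TopCat.of <| ULift <| Metric.sphere (0 : EuclideanSpace ℝ <| Fin <| Int.toNat <| n + 1) 1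

/-- The `n`-dimensional closed disk. -/
noncomputable def disk (n : ℤ) : TopCat.{u} :=
  TopCat.of <| ULift <| Metric.closedBall (0 : EuclideanSpace ℝ <| Fin <| Int.toNat n) 1

/-- The inclusion map from the `n`-sphere to the `(n + 1)`-disk. -/
noncomputable def sphereInclusion (n : ℤ) : sphere.{u} n ⟶ disk.{u} (n + 1) :=
  TopCat.ofHom ⟨fun x => ULift.up ⟨x.down.1, le_of_eq x.down.2⟩,
    continuous_uliftUp.comp
      ((continuous_subtype_val.comp continuous_uliftDown).subtype_mk _)⟩

/-- A type witnessing that `X'` is obtained from `X` by attaching generalized cells `f : A ⟶ B`. -/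
structure AttachGeneralizedCells {A B : TopCat.{u}} (f : A ⟶ B) (X X' : TopCat.{u}) where
  /-- The index type over the generalized cells -/
  cells : Type u
  /-- An attaching map for each generalized cell -/
  attachMaps : cells → (A ⟶ X)
  /-- `X'` is the pushout of `∐ A ⟶ X` and `∐ A ⟶ ∐ B`. -/
  iso_pushout : X' ≅ Limits.pushout (Limits.Sigma.desc attachMaps)
    (Limits.Sigma.map fun (_ : cells) ↦ f)

/-- A type witnessing that `X'` is obtained from `X` by attaching `(n + 1)`-disks. -/
def AttachCells (n : ℤ) := AttachGeneralizedCells (sphereInclusion.{u} n)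

end CWComplexOld

/-- A relative CW-complex: `sk (n + 1)` is obtained from `sk n` by attaching `n`-disks. -/
structure RelativeCWComplex where
  /-- The skeletons. -/
  sk : ℕ → TopCat.{u}
  /-- Each `sk (n + 1)` is obtained from `sk n` by attaching `n`-disks. -/
  attachCells (n : ℕ) : CWComplexOld.AttachCells ((n : ℤ) - 1) (sk n) (sk (n + 1))

/-- A CW-complex is a relative CW-complex whose `sk 0` is empty. -/
structure CWComplexOld extends RelativeCWComplex.{u} where
  /-- `sk 0` is empty. -/
  isEmpty_sk_zero : IsEmpty (sk 0)

namespace RelativeCWComplex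

open CategoryTheory

/-- The inclusion map `sk n ⟶ sk (n + 1)`. -/
noncomputable def skInclusion (X : RelativeCWComplex.{u}) (n : ℕ) : X.sk n ⟶ X.sk (n + 1) :=
  Limits.pushout.inl _ _ ≫ (X.attachCells n).iso_pushout.inv

/-- The topology on a relative CW-complex. -/
noncomputable def toTopCat (X : RelativeCWComplex.{u}) : TopCat.{u} :=
  Limits.colimit (Functor.ofSequence (skInclusion X))

end RelativeCWComplex

/-!
A space is numerically generated as soon as its topology is final for a family of continuous
maps out of numerically generated spaces, since composing with the simplices of the sources
produces simplices of the target. Simplices are numerically generated, closed disks are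
quotients of simplices (retract an affine image of `Δᵏ` containing the cube `[-1, 1]ᵏ` radially
onto the ball), and the topology of a colimit in `TopCat` is final for the colimit injections.
Building a CW-complex skeleton by skeleton from coproducts of disks and pushouts along them
then gives the result.
-/

namespace NumericallyGenerated

variable {X Y : Type*}

theorem nuTop_le (t : TopologicalSpace X) : nuTop X t ≤ t :=
  iSup₂_le fun _ σ => continuous_iff_coinduced_le.mp σ.2

theorem iff_le_nuTop {t : TopologicalSpace X} :
    @NumericallyGenerated X t ↔ t ≤ nuTop X t :=
  ⟨le_of_eq, fun h => le_antisymm h (nuTop_le t)⟩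

theorem coinduced_le_nuTop {tY : TopologicalSpace Y} {t : TopologicalSpace X} {f : Y → X}
    (hY : @NumericallyGenerated Y tY) (hf : Continuous[tY, t] f) :
    tY.coinduced f ≤ nuTop X t := by
  conv_lhs => rw [show tY = nuTop Y tY from hY, nuTop]
  simp only [coinduced_iSup, coinduced_compose]
  exact iSup₂_le fun n σ => le_iSup₂_of_le (f := fun n (σ : {g : TopSimplex n → X // _}) =>
    coinduced σ.1 inferInstance) n ⟨f ∘ σ.1, hf.comp σ.2⟩ le_rfl

theorem of_le_coinduced {tY : TopologicalSpace Y} {t : TopologicalSpace X} {f : Y → X}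
    (hY : @NumericallyGenerated Y tY) (hf : Continuous[tY, t] f) (h : t ≤ tY.coinduced f) :
    @NumericallyGenerated X t :=
  iff_le_nuTop.mpr (h.trans (coinduced_le_nuTop hY hf))

theorem of_isQuotientMap [TopologicalSpace X] [TopologicalSpace Y] {f : Y → X}
    (hY : NumericallyGenerated Y) (hf : IsQuotientMap f) : NumericallyGenerated X :=
  of_le_coinduced hY hf.continuous hf.eq_coinduced.le

theorem of_homeomorph [TopologicalSpace X] [TopologicalSpace Y] (e : X ≃ₜ Y)
    (hY : NumericallyGenerated Y) : NumericallyGenerated X :=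
  of_isQuotientMap hY e.symm.isQuotientMap

theorem of_isEmpty [IsEmpty X] [t : TopologicalSpace X] : NumericallyGenerated X :=
  iff_le_nuTop.mpr fun s _ => Set.eq_empty_of_isEmpty s ▸ isOpen_empty

theorem topSimplex (n : ℕ) : NumericallyGenerated (TopSimplex n) :=
  iff_le_nuTop.mpr (le_iSup₂_of_le n ⟨id, continuous_id⟩ (coinduced_id).ge)

end NumericallyGenerated

section RadialRetract

variable {E : Type*} [NormedAddCommGroup E]

theorem one_le_max_one_norm (v : E) : 1 ≤ max 1 ‖v‖ := le_max_left _ _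

variable [NormedSpace ℝ E]

noncomputable def radialRetract (v : E) : E := (max 1 ‖v‖)⁻¹ • v

theorem continuous_radialRetract : Continuous (radialRetract (E := E)) :=
  ((continuous_const.max continuous_norm).inv₀
    fun v => (one_pos.trans_le (one_le_max_one_norm v)).ne').smul continuous_id

theorem radialRetract_mem_closedBall (v : E) : radialRetract v ∈ Metric.closedBall (0 : E) 1 := by
  have hpos := one_pos.trans_le (one_le_max_one_norm v)
  rw [mem_closedBall_zero_iff, radialRetract, norm_smul, norm_inv,
    Real.norm_of_nonneg hpos.le, inv_mul_le_one₀ hpos]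
  exact le_max_right _ _

theorem radialRetract_of_norm_le_one {v : E} (h : ‖v‖ ≤ 1) : radialRetract v = v := by
  rw [radialRetract, max_eq_left h, inv_one, one_smul]

end RadialRetract

section Disk

noncomputable def simplexToCube (k : ℕ) (x : TopSimplex k) : EuclideanSpace ℝ (Fin k) :=
  WithLp.toLp 2 fun i => 2 * k * x.1 i.castSucc - 1

theorem continuous_simplexToCube (k : ℕ) : Continuous (simplexToCube k) :=
  (PiLp.continuous_toLp 2 _).comp <| continuous_pi fun _ =>
    (continuous_const.mul ((continuous_apply _).comp continuous_subtype_val)).sub continuous_const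

theorem mem_range_simplexToCube {k : ℕ} {z : EuclideanSpace ℝ (Fin k)} (hz : ∀ i, |z i| ≤ 1) :
    z ∈ Set.range (simplexToCube k) := by
  rcases Nat.eq_zero_or_pos k with rfl | hk
  · exact ⟨⟨Pi.single 0 1, single_mem_stdSimplex ℝ 0⟩, Subsingleton.elim _ _⟩
  have hk' : (0 : ℝ) < 2 * k := by positivity
  set y : Fin k → ℝ := fun i => (z i + 1) / (2 * k)
  have hy_nonneg (i : Fin k) : 0 ≤ y i := div_nonneg (by linarith [(abs_le.mp (hz i)).1]) hk'.le
  have hy_sum : ∑ i, y i ≤ 1 := by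
    calc ∑ i, y i ≤ ∑ _i : Fin k, (1 : ℝ) / k := by
          refine Finset.sum_le_sum fun i _ => ?_
          rw [div_le_div_iff₀ hk' (by positivity)]
          nlinarith [(abs_le.mp (hz i)).2, (Nat.cast_pos.mpr hk : (0 : ℝ) < k)]
      _ = 1 := by simp [hk.ne']
  have hmem : Fin.snoc y (1 - ∑ i, y i) ∈ stdSimplex ℝ (Fin (k + 1)) := by
    refine ⟨fun i => ?_, ?_⟩
    · induction i using Fin.lastCases with
      | last => simpa using hy_sum
      | cast i => simpa using hy_nonneg i
    · simp [Fin.sum_univ_castSucc]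
  refine ⟨⟨_, hmem⟩, PiLp.ext fun i => ?_⟩
  simp only [simplexToCube, Fin.snoc_castSucc, y]
  field_simp
  ring

noncomputable def simplexToClosedBall (k : ℕ) (x : TopSimplex k) :
    Metric.closedBall (0 : EuclideanSpace ℝ (Fin k)) 1 :=
  ⟨radialRetract (simplexToCube k x), radialRetract_mem_closedBall _⟩

theorem continuous_simplexToClosedBall (k : ℕ) : Continuous (simplexToClosedBall k) :=
  (continuous_radialRetract.comp (continuous_simplexToCube k)).subtype_mk _

theorem surjective_simplexToClosedBall (k : ℕ) : Function.Surjective (simplexToClosedBall k) := by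
  rintro ⟨z, hz⟩
  rw [mem_closedBall_zero_iff] at hz
  obtain ⟨x, hx⟩ := mem_range_simplexToCube fun i =>
    (Real.norm_eq_abs _ ▸ PiLp.norm_apply_le z i).trans hz
  exact ⟨x, Subtype.ext <| by simp only [simplexToClosedBall, hx, radialRetract_of_norm_le_one hz]⟩

theorem NumericallyGenerated.closedBall (k : ℕ) :
    NumericallyGenerated (Metric.closedBall (0 : EuclideanSpace ℝ (Fin k)) 1) :=
  of_isQuotientMap (topSimplex k) <| .of_surjective_continuous
    (surjective_simplexToClosedBall k) (continuous_simplexToClosedBall k)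

theorem CWComplexOld.numericallyGenerated_disk (n : ℤ) : NumericallyGenerated (disk.{u} n) :=
  .of_homeomorph Homeomorph.ulift (.closedBall n.toNat)

end Disk

open CategoryTheory Limits

/-- The injection of `j` factors through that of `j'`, so only the targets `j'` need to be
numerically generated (for a pushout, the common source need not be). -/
theorem TopCat.numericallyGenerated_colimit {J : Type*} [Category J] (F : J ⥤ TopCat.{u})
    [HasColimit F] (hF : ∀ j, ∃ j', Nonempty (j ⟶ j') ∧ NumericallyGenerated (F.obj j')) :
    NumericallyGenerated ↑(Limits.colimit F) := by
  refine NumericallyGenerated.iff_le_nuTop.mpr <|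
    (colimit_topology F).le.trans (iSup_le fun j => ?_)
  obtain ⟨j', ⟨g⟩, hj'⟩ := hF j
  calc (F.obj j).str.coinduced (colimit.ι F j)
      = ((F.obj j).str.coinduced (F.map g)).coinduced (colimit.ι F j') := by
        rw [coinduced_compose, ← colimit.w F g]; rfl
    _ ≤ (F.obj j').str.coinduced (colimit.ι F j') :=
        coinduced_mono (continuous_iff_coinduced_le.mp (F.map g).hom.continuous)
    _ ≤ _ := NumericallyGenerated.coinduced_le_nuTop hj' (colimit.ι F j').hom.continuous

theorem TopCat.numericallyGenerated_sigma {ι : Type u} (F : ι → TopCat.{u})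
    (hF : ∀ i, NumericallyGenerated (F i)) : NumericallyGenerated ↑(∐ F) :=
  numericallyGenerated_colimit _ fun i => ⟨i, ⟨𝟙 i⟩, hF i.as⟩

theorem TopCat.numericallyGenerated_pushout {A B C : TopCat.{u}} (f : A ⟶ B) (g : A ⟶ C)
    (hB : NumericallyGenerated B) (hC : NumericallyGenerated C) :
    NumericallyGenerated ↑(pushout f g) :=
  numericallyGenerated_colimit _ fun
    | none => ⟨WalkingSpan.left, ⟨WalkingSpan.Hom.fst⟩, hB⟩
    | some .left => ⟨WalkingSpan.left, ⟨𝟙 _⟩, hB⟩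
    | some .right => ⟨WalkingSpan.right, ⟨𝟙 _⟩, hC⟩

namespace RelativeCWComplex

variable (X : RelativeCWComplex.{u})

theorem numericallyGenerated_sk (h₀ : NumericallyGenerated (X.sk 0)) (n : ℕ) :
    NumericallyGenerated (X.sk n) := by
  induction n with
  | zero => exact h₀
  | succ n ih =>
    exact .of_homeomorph (TopCat.homeoOfIso (X.attachCells n).iso_pushout)
      (TopCat.numericallyGenerated_pushout _ _ ih
        (TopCat.numericallyGenerated_sigma _ fun _ => CWComplexOld.numericallyGenerated_disk _))

theorem numericallyGenerated_toTopCat (h₀ : NumericallyGenerated (X.sk 0)) :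
    NumericallyGenerated X.toTopCat :=
  TopCat.numericallyGenerated_colimit _ fun n => ⟨n, ⟨𝟙 n⟩, X.numericallyGenerated_sk h₀ n⟩

end RelativeCWComplex

/-- Every space admitting a CW-complex structure is numerically generated. -/
theorem numericallyGenerated_of_cwComplex (X : Type u) [TopologicalSpace X]
    (K : CWComplexOld.{u}) (e : X ≃ₜ K.toRelativeCWComplex.toTopCat) :
    NumericallyGenerated X :=
  .of_homeomorph e <| K.numericallyGenerated_toTopCat <|
    @NumericallyGenerated.of_isEmpty _ K.isEmpty_sk_zero _
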